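/- For a connected weighted graph, the effective resistance satisfies R(u,v) = (D^{-1} σ_u)_u - (D^{-1} σ_u)_v - (D^{-1} σ_v)_u + (D^{-1} σ_v)_v, where σ_u = (1/2) sum_{t=0}^∞ ( X^t 1_u - π ) with X the lazy random walk matrix and π the stationary distribution. -/

import Mathlib

/-!
Write `D` for the degree matrix, `e_w` for the indicator of `w`, `Q = π 1ᵀ` and
`p = D^{1/2} 1 / √(1ᵀ D 1)`, so that `p² = π` entrywise. Conjugating by `D^{1/2}` turns the lazy
walk `X` into the symmetric matrix `N = (I + D^{-1/2} A D^{-1/2}) / 2`, and `Q` into `p pᵀ`.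
The quadratic form of `N` lies between `0` and `|x|²`, and `N x = x` only for `x ∈ ℝ p`, because
`ker L` consists of the constants. Hence every eigenvalue of the symmetric matrix `N - p pᵀ` has
absolute value `< 1`, and `X^t - Q = D^{1/2} (N - p pᵀ)^t (I - p pᵀ) D^{-1/2}` is summable.

Since `X π = π`, the sum `s = ∑_t (X^t e_w - π)` satisfies `s = (e_w - π) + X s`, and with
`L D⁻¹ = 2 (I - X)` this is `L D⁻¹ σ_w = e_w - π`. So `h = D⁻¹ σ_u - D⁻¹ σ_v` solves
`L h = e_u - e_v`. By `L L⁺ L = L` so does `L⁺ (e_u - e_v)`, the two differ by a constant vector,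
and pairing with `e_u - e_v` gives `R(u, v) = h_u - h_v`.
-/

open Matrix

theorem Summable.tsum_eq_add_map_tsum {R M : Type*} [Semiring R] [AddCommGroup M] [Module R M]
    [TopologicalSpace M] [IsTopologicalAddGroup M] [T2Space M] {f : ℕ → M} (hf : Summable f)
    (T : M →L[R] M) (h : ∀ t, f (t + 1) = T (f t)) : ∑' t, f t = f 0 + T (∑' t, f t) := by
  conv_lhs => rw [hf.tsum_eq_zero_add, tsum_congr h, ← T.map_tsum hf]

theorem sub_pow_mul_one_sub {R : Type*} [Ring R] {X Q : R} (hXQ : X * Q = Q) (hQX : Q * X = Q)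
    (hQQ : Q * Q = Q) (t : ℕ) : (X - Q) ^ t * (1 - Q) = X ^ t - Q := by
  induction t with
  | zero => simp
  | succ t ih =>
    have hcomm : (X - Q) * (1 - Q) = (1 - Q) * X := by
      simp only [mul_sub, sub_mul, mul_one, one_mul, hXQ, hQX, hQQ]
      abel
    rw [pow_succ, mul_assoc, hcomm, ← mul_assoc, ih, sub_mul, hQX, pow_succ]

theorem summable_pow_sub_of_mul_eq_mul {R : Type*} [Ring R] [TopologicalSpace R]
    [IsTopologicalRing R] {X Q N P S T : R} (hST : S * T = 1) (hXN : X * S = S * N)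
    (hQP : Q * S = S * P) (hN : Summable fun t : ℕ => N ^ t - P) :
    Summable fun t : ℕ => X ^ t - Q := by
  have hconj (t : ℕ) : X ^ t - Q = S * (N ^ t - P) * T := by
    rw [mul_sub, sub_mul, (SemiconjBy.pow_right hXN.symm t).eq, ← hQP, mul_assoc, mul_assoc, hST,
      mul_one, mul_one]
  simpa only [hconj] using (hN.mul_left S).mul_right T

section

variable {n : Type*} [Fintype n]

theorem abs_sum_mul_mul_le_sum_degree_mul_sq {A : Matrix n n ℝ} (hsym : A.IsSymm)
    (hnonneg : ∀ i j, 0 ≤ A i j) (z : n → ℝ) :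
    |∑ i, ∑ j, A i j * z i * z j| ≤ ∑ i, (∑ j, A i j) * z i ^ 2 := by
  have hdeg : ∑ i, (∑ j, A i j) * z i ^ 2 = ∑ i, ∑ j, A i j * z i ^ 2 := by
    simp only [Finset.sum_mul]
  have hswap : ∑ i, ∑ j, A i j * z j ^ 2 = ∑ i, ∑ j, A i j * z i ^ 2 := by
    rw [Finset.sum_comm]
    simp_rw [hsym.apply]
  have hexpand (ε : ℝ) : ∑ i, ∑ j, A i j * (z i + ε * z j) ^ 2 =
      (1 + ε ^ 2) * ∑ i, (∑ j, A i j) * z i ^ 2 + 2 * ε * ∑ i, ∑ j, A i j * z i * z j := by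
    calc ∑ i, ∑ j, A i j * (z i + ε * z j) ^ 2
        = ∑ i, ∑ j, (A i j * z i ^ 2 + ε ^ 2 * (A i j * z j ^ 2)
            + 2 * ε * (A i j * z i * z j)) :=
          Finset.sum_congr rfl fun i _ => Finset.sum_congr rfl fun j _ => by ring
      _ = ∑ i, ∑ j, A i j * z i ^ 2 + ε ^ 2 * ∑ i, ∑ j, A i j * z j ^ 2
          + 2 * ε * ∑ i, ∑ j, A i j * z i * z j := by
          simp only [Finset.sum_add_distrib, Finset.mul_sum]
      _ = _ := by rw [hswap, hdeg]; ring
  have hnonneg_sq (ε : ℝ) : 0 ≤ ∑ i, ∑ j, A i j * (z i + ε * z j) ^ 2 :=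
    Finset.sum_nonneg fun i _ => Finset.sum_nonneg fun j _ =>
      mul_nonneg (hnonneg i j) (sq_nonneg _)
  have hplus := hexpand 1 ▸ hnonneg_sq 1
  have hminus := hexpand (-1) ▸ hnonneg_sq (-1)
  norm_num at hplus hminus
  rw [abs_le]
  constructor <;> linarith

variable (A : Matrix n n ℝ)

noncomputable def sqrtDegree (i : n) : ℝ := √(∑ j, A i j)

noncomputable def sqrtStationaryDist : n → ℝ := (√(∑ i, ∑ j, A i j))⁻¹ • sqrtDegree A

noncomputable def normalizedAdjacency : Matrix n n ℝ :=
  of fun i j => A i j / (sqrtDegree A i * sqrtDegree A j)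

variable {A}

theorem sqrtDegree_pos (hdpos : ∀ i, 0 < ∑ j, A i j) (i : n) : 0 < sqrtDegree A i :=
  Real.sqrt_pos.2 (hdpos i)

theorem sqrtDegree_mul_self (hdpos : ∀ i, 0 < ∑ j, A i j) (i : n) :
    sqrtDegree A i * sqrtDegree A i = ∑ j, A i j :=
  Real.mul_self_sqrt (hdpos i).le

theorem sqrtStationaryDist_dotProduct_self [Nonempty n] (hdpos : ∀ i, 0 < ∑ j, A i j) :
    sqrtStationaryDist A ⬝ᵥ sqrtStationaryDist A = 1 := by
  have hS : 0 < ∑ i, ∑ j, A i j := Finset.sum_pos (fun i _ => hdpos i) Finset.univ_nonempty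
  have hss : sqrtDegree A ⬝ᵥ sqrtDegree A = ∑ i, ∑ j, A i j :=
    Finset.sum_congr rfl fun i _ => sqrtDegree_mul_self hdpos i
  rw [sqrtStationaryDist, smul_dotProduct, dotProduct_smul, hss, smul_eq_mul, smul_eq_mul,
    ← mul_assoc, ← mul_inv, Real.mul_self_sqrt hS.le, inv_mul_cancel₀ hS.ne']

theorem normalizedAdjacency_isSymm (hsym : A.IsSymm) : (normalizedAdjacency A).IsSymm :=
  IsSymm.ext fun i j => by simp only [normalizedAdjacency, of_apply, hsym.apply, mul_comm]

theorem abs_dotProduct_normalizedAdjacency_mulVec_le (hsym : A.IsSymm)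
    (hnonneg : ∀ i j, 0 ≤ A i j) (hdpos : ∀ i, 0 < ∑ j, A i j) (x : n → ℝ) :
    |x ⬝ᵥ normalizedAdjacency A *ᵥ x| ≤ x ⬝ᵥ x := by
  set z : n → ℝ := fun i => x i / sqrtDegree A i
  have hquad : x ⬝ᵥ normalizedAdjacency A *ᵥ x = ∑ i, ∑ j, A i j * z i * z j := by
    simp only [dotProduct, mulVec, Finset.mul_sum]
    refine Finset.sum_congr rfl fun i _ => Finset.sum_congr rfl fun j _ => ?_
    simp only [normalizedAdjacency, of_apply, z]
    ring
  have hnorm : ∑ i, (∑ j, A i j) * z i ^ 2 = x ⬝ᵥ x := by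
    refine Finset.sum_congr rfl fun i _ => ?_
    have := sqrtDegree_pos hdpos i
    rw [← sqrtDegree_mul_self hdpos i]
    simp only [z]
    field_simp
  rw [hquad, ← hnorm]
  exact abs_sum_mul_mul_le_sum_degree_mul_sq hsym hnonneg z

theorem normalizedAdjacency_mulVec_sqrtDegree (hdpos : ∀ i, 0 < ∑ j, A i j) :
    normalizedAdjacency A *ᵥ sqrtDegree A = sqrtDegree A := by
  ext i
  have hterm (j : n) :
      normalizedAdjacency A i j * sqrtDegree A j = A i j / sqrtDegree A i := by
    have := sqrtDegree_pos hdpos j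
    simp only [normalizedAdjacency, of_apply]
    field_simp
  have := sqrtDegree_pos hdpos i
  rw [mulVec, dotProduct, Finset.sum_congr rfl fun j _ => hterm j, ← Finset.sum_div,
    ← sqrtDegree_mul_self hdpos i]
  field_simp

end

section

variable {n : Type*} [Fintype n] [DecidableEq n]

theorem Matrix.IsHermitian.summable_pow {𝕜 : Type*} [RCLike 𝕜] {M : Matrix n n 𝕜}
    (hM : M.IsHermitian) (h : ∀ k, |hM.eigenvalues k| < 1) : Summable (M ^ · : ℕ → _) := by
  set U : Matrix n n 𝕜 := (hM.eigenvectorUnitary : Matrix n n 𝕜)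
  have hpow (t : ℕ) :
      M ^ t = U * diagonal (fun k => (hM.eigenvalues k : 𝕜) ^ t) * star U := by
    conv_lhs =>
      rw [hM.spectral_theorem, ← map_pow, diagonal_pow, Unitary.conjStarAlgAut_apply]
    rfl
  have hdiag : Summable fun t : ℕ => diagonal (fun k => (hM.eigenvalues k : 𝕜) ^ t) :=
    Summable.matrix_diagonal (Pi.summable.2 fun k =>
      summable_geometric_of_norm_lt_one (by simpa using h k))
  simpa only [hpow] using (hdiag.mul_left U).mul_right (star U)

theorem abs_eigenvalues_sub_vecMulVec_lt_one {N : Matrix n n ℝ} {p : n → ℝ} (hN : N.IsSymm)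
    (hN0 : ∀ x, 0 ≤ x ⬝ᵥ N *ᵥ x) (hN1 : ∀ x, x ⬝ᵥ N *ᵥ x ≤ x ⬝ᵥ x) (hNp : N *ᵥ p = p)
    (hfix : ∀ x, N *ᵥ x = x → ∃ c : ℝ, x = c • p) (hp : p ⬝ᵥ p = 1)
    (hM : (N - vecMulVec p p).IsHermitian) (k : n) : |hM.eigenvalues k| < 1 := by
  set μ := hM.eigenvalues k
  set v : n → ℝ := ⇑(hM.eigenvectorBasis k)
  have hv : (N - vecMulVec p p) *ᵥ v = μ • v := hM.mulVec_eigenvectorBasis k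
  have hvv : v ⬝ᵥ v = 1 := by
    have h := real_inner_self_eq_norm_sq (hM.eigenvectorBasis k)
    rwa [hM.eigenvectorBasis.orthonormal.1 k, one_pow, EuclideanSpace.inner_eq_star_dotProduct,
      star_trivial] at h
  have hP (x : n → ℝ) : vecMulVec p p *ᵥ x = (p ⬝ᵥ x) • p := by
    rw [vecMulVec_mulVec, op_smul_eq_smul]
  have hpN (x : n → ℝ) : p ⬝ᵥ N *ᵥ x = p ⬝ᵥ x := by
    rw [dotProduct_mulVec, ← mulVec_transpose, hN.eq, hNp, dotProduct_comm]
  -- `(N - p pᵀ) p = 0`, so by symmetry eigenvectors for `μ ≠ 0` are orthogonal to `p`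
  have hpv : μ * (p ⬝ᵥ v) = 0 := by
    have := congrArg (p ⬝ᵥ ·) hv
    simp only [sub_mulVec, dotProduct_sub, hpN, hP, dotProduct_smul, hp, smul_eq_mul] at this
    linarith
  rcases eq_or_ne μ 0 with hμ | hμ
  · simp [hμ]
  have hpv0 : p ⬝ᵥ v = 0 := (mul_eq_zero.1 hpv).resolve_left hμ
  have hNv : N *ᵥ v = μ • v := by
    rw [← hv, sub_mulVec, hP, hpv0, zero_smul, sub_zero]
  have hvNv : v ⬝ᵥ N *ᵥ v = μ := by rw [hNv, dotProduct_smul, hvv, smul_eq_mul, mul_one]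
  have hμ1 : μ ≠ 1 := by
    intro h1
    obtain ⟨c, hc⟩ := hfix v (by rw [hNv, h1, one_smul])
    have : c = 0 := by simpa [hc, hp] using hpv0
    simp [hc, this] at hvv
  have hμ_nonneg : 0 ≤ μ := hvNv ▸ hN0 v
  have hμ_le : μ ≤ 1 := by simpa [hvNv, hvv] using hN1 v
  exact abs_lt.2 ⟨by linarith, lt_of_le_of_ne hμ_le hμ1⟩

theorem summable_pow_sub_vecMulVec {N : Matrix n n ℝ} {p : n → ℝ} (hN : N.IsSymm)
    (hN0 : ∀ x, 0 ≤ x ⬝ᵥ N *ᵥ x) (hN1 : ∀ x, x ⬝ᵥ N *ᵥ x ≤ x ⬝ᵥ x) (hNp : N *ᵥ p = p)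
    (hfix : ∀ x, N *ᵥ x = x → ∃ c : ℝ, x = c • p) (hp : p ⬝ᵥ p = 1) :
    Summable fun t : ℕ => N ^ t - vecMulVec p p := by
  have hM : (N - vecMulVec p p).IsHermitian := by
    rw [isHermitian_iff_isSymm]
    exact hN.sub (transpose_vecMulVec p p)
  have hNP : N * vecMulVec p p = vecMulVec p p := by rw [mul_vecMulVec, hNp]
  have hPN : vecMulVec p p * N = vecMulVec p p := by
    rw [vecMulVec_mul, ← hN.eq, vecMul_transpose, hNp]
  have hPP : vecMulVec p p * vecMulVec p p = vecMulVec p p := by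
    rw [mul_vecMulVec, vecMulVec_mulVec, op_smul_eq_smul, hp, one_smul]
  have hM_pow :=
    hM.summable_pow (abs_eigenvalues_sub_vecMulVec_lt_one hN hN0 hN1 hNp hfix hp hM)
  simpa only [sub_pow_mul_one_sub hNP hPN hPP] using hM_pow.mul_right (1 - vecMulVec p p)

theorem single_sub_single_dotProduct_mulVec_eq {L Lp : Matrix n n ℝ} (hmp : L * Lp * L = L)
    (hker : ∀ x, L *ᵥ x = 0 → ∃ c : ℝ, ∀ i, x i = c) {h : n → ℝ} {u v : n}
    (hh : L *ᵥ h = Pi.single u 1 - Pi.single v 1) :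
    (Pi.single u 1 - Pi.single v 1) ⬝ᵥ Lp *ᵥ (Pi.single u 1 - Pi.single v 1) = h u - h v := by
  have hLLp : L *ᵥ Lp *ᵥ L *ᵥ h = L *ᵥ h := by rw [mulVec_mulVec, mulVec_mulVec, hmp]
  obtain ⟨c, hc⟩ := hker (h - Lp *ᵥ L *ᵥ h) (by rw [mulVec_sub, hLLp, sub_self])
  have hu := hc u
  have hv := hc v
  simp only [Pi.sub_apply, hh] at hu hv
  simp only [sub_dotProduct, single_dotProduct, one_mul]
  linarith

variable (A : Matrix n n ℝ)

noncomputable def laplacian : Matrix n n ℝ := diagonal (fun i => ∑ j, A i j) - A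

noncomputable def lazyWalk : Matrix n n ℝ :=
  (1 / 2 : ℝ) • 1 + (1 / 2 : ℝ) • (A * diagonal fun i => (∑ j, A i j)⁻¹)

noncomputable def stationaryDist : n → ℝ := fun i => (∑ j, A i j) / ∑ i, ∑ j, A i j

-- `D^{-1/2} X D^{1/2}` for the lazy walk `X = lazyWalk A`
noncomputable def symmLazyWalk : Matrix n n ℝ := (1 / 2 : ℝ) • (1 + normalizedAdjacency A)

variable {A}

theorem laplacian_mul_diagonal_inv_degree (hdpos : ∀ i, 0 < ∑ j, A i j) :
    laplacian A * diagonal (fun i => (∑ j, A i j)⁻¹) = (2 : ℝ) • (1 - lazyWalk A) := by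
  have hD : diagonal (fun i => ∑ j, A i j) * diagonal (fun i => (∑ j, A i j)⁻¹) = 1 := by
    rw [diagonal_mul_diagonal, ← diagonal_one]
    exact congrArg diagonal (funext fun i => mul_inv_cancel₀ (hdpos i).ne')
  rw [laplacian, lazyWalk, sub_mul, hD]
  module

theorem lazyWalk_mulVec_stationaryDist (hdpos : ∀ i, 0 < ∑ j, A i j) :
    lazyWalk A *ᵥ stationaryDist A = stationaryDist A := by
  have hDπ : diagonal (fun i => (∑ j, A i j)⁻¹) *ᵥ stationaryDist A =
      fun _ => (∑ i, ∑ j, A i j)⁻¹ := by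
    ext i
    rw [mulVec_diagonal, stationaryDist, inv_mul_eq_div, div_div_cancel_left' (hdpos i).ne']
  have hAD : (A * diagonal fun i => (∑ j, A i j)⁻¹) *ᵥ stationaryDist A = stationaryDist A := by
    ext i
    rw [← mulVec_mulVec, hDπ, mulVec, dotProduct, ← Finset.sum_mul, stationaryDist,
      div_eq_mul_inv]
  rw [lazyWalk, add_mulVec, smul_mulVec, smul_mulVec, one_mulVec, hAD]
  module

theorem exists_eq_smul_sqrtDegree_of_normalizedAdjacency_mulVec_eq
    (hdpos : ∀ i, 0 < ∑ j, A i j) (hker : ∀ x, laplacian A *ᵥ x = 0 → ∃ c : ℝ, ∀ i, x i = c)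
    {x : n → ℝ} (hx : normalizedAdjacency A *ᵥ x = x) : ∃ c : ℝ, x = c • sqrtDegree A := by
  set z : n → ℝ := fun i => x i / sqrtDegree A i
  have hLz : laplacian A *ᵥ z = 0 := by
    ext i
    have hi := sqrtDegree_pos hdpos i
    have hAz : (A *ᵥ z) i = sqrtDegree A i * x i := by
      rw [← congrFun hx i, mulVec, mulVec, dotProduct, dotProduct, Finset.mul_sum]
      refine Finset.sum_congr rfl fun j _ => ?_
      simp only [normalizedAdjacency, of_apply, z]
      field_simp
    rw [laplacian, sub_mulVec, Pi.sub_apply, mulVec_diagonal, hAz, ← sqrtDegree_mul_self hdpos i]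
    simp only [z, Pi.zero_apply]
    field_simp
    ring
  obtain ⟨c, hc⟩ := hker z hLz
  refine ⟨c, funext fun i => ?_⟩
  have := sqrtDegree_pos hdpos i
  rw [Pi.smul_apply, smul_eq_mul, ← hc i]
  simp only [z]
  field_simp

theorem symmLazyWalk_isSymm (hsym : A.IsSymm) : (symmLazyWalk A).IsSymm :=
  (isSymm_one.add (normalizedAdjacency_isSymm hsym)).smul _

theorem dotProduct_symmLazyWalk_mulVec (x : n → ℝ) :
    x ⬝ᵥ symmLazyWalk A *ᵥ x = (x ⬝ᵥ x + x ⬝ᵥ normalizedAdjacency A *ᵥ x) / 2 := by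
  rw [symmLazyWalk, smul_mulVec, add_mulVec, one_mulVec, dotProduct_smul, dotProduct_add,
    smul_eq_mul]
  ring

theorem symmLazyWalk_mulVec_sqrtDegree (hdpos : ∀ i, 0 < ∑ j, A i j) :
    symmLazyWalk A *ᵥ sqrtDegree A = sqrtDegree A := by
  rw [symmLazyWalk, smul_mulVec, add_mulVec, one_mulVec,
    normalizedAdjacency_mulVec_sqrtDegree hdpos]
  module

theorem exists_eq_smul_sqrtDegree_of_symmLazyWalk_mulVec_eq (hdpos : ∀ i, 0 < ∑ j, A i j)
    (hker : ∀ x, laplacian A *ᵥ x = 0 → ∃ c : ℝ, ∀ i, x i = c) {x : n → ℝ}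
    (hx : symmLazyWalk A *ᵥ x = x) : ∃ c : ℝ, x = c • sqrtDegree A := by
  refine exists_eq_smul_sqrtDegree_of_normalizedAdjacency_mulVec_eq hdpos hker ?_
  rw [symmLazyWalk, smul_mulVec, add_mulVec, one_mulVec] at hx
  calc normalizedAdjacency A *ᵥ x
      = (2 : ℝ) • ((1 / 2 : ℝ) • (x + normalizedAdjacency A *ᵥ x)) - x := by module
    _ = x := by rw [hx]; module

theorem lazyWalk_mul_diagonal_sqrtDegree (hdpos : ∀ i, 0 < ∑ j, A i j) :
    lazyWalk A * diagonal (sqrtDegree A) = diagonal (sqrtDegree A) * symmLazyWalk A := by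
  ext i j
  have hi := sqrtDegree_pos hdpos i
  have hj := sqrtDegree_pos hdpos j
  simp only [lazyWalk, symmLazyWalk, normalizedAdjacency, mul_diagonal, diagonal_mul,
    Matrix.add_apply, Matrix.smul_apply, of_apply, smul_eq_mul, ← sqrtDegree_mul_self hdpos j]
  rcases eq_or_ne i j with rfl | hij
  · simp only [one_apply_eq]
    field_simp
  · simp only [one_apply_ne hij]
    field_simp
    ring

theorem stationaryDist_mul_diagonal_sqrtDegree (hdpos : ∀ i, 0 < ∑ j, A i j) :
    (of fun i _ => stationaryDist A i) * diagonal (sqrtDegree A) =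
      diagonal (sqrtDegree A) * vecMulVec (sqrtStationaryDist A) (sqrtStationaryDist A) := by
  ext i j
  have hS : 0 < ∑ i, ∑ j, A i j := Finset.sum_pos (fun i _ => hdpos i) ⟨i, Finset.mem_univ i⟩
  have hi := sqrtDegree_pos hdpos i
  simp only [stationaryDist, sqrtStationaryDist, mul_diagonal, diagonal_mul, of_apply,
    vecMulVec_apply, Pi.smul_apply, smul_eq_mul, ← sqrtDegree_mul_self hdpos i]
  field_simp
  rw [Real.sq_sqrt hS.le, mul_comm]


theorem summable_lazyWalk_pow_sub [Nonempty n] (hsym : A.IsSymm) (hnonneg : ∀ i j, 0 ≤ A i j)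
    (hdpos : ∀ i, 0 < ∑ j, A i j) (hker : ∀ x, laplacian A *ᵥ x = 0 → ∃ c : ℝ, ∀ i, x i = c) :
    Summable fun t : ℕ => lazyWalk A ^ t - of fun i _ => stationaryDist A i := by
  have hS : 0 < √(∑ i, ∑ j, A i j) :=
    Real.sqrt_pos.2 (Finset.sum_pos (fun i _ => hdpos i) Finset.univ_nonempty)
  have hquad := abs_dotProduct_normalizedAdjacency_mulVec_le hsym hnonneg hdpos
  have hN : Summable fun t : ℕ =>
      symmLazyWalk A ^ t - vecMulVec (sqrtStationaryDist A) (sqrtStationaryDist A) := by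
    refine summable_pow_sub_vecMulVec (symmLazyWalk_isSymm hsym) (fun x => ?_) (fun x => ?_) ?_
      (fun x hx => ?_) (sqrtStationaryDist_dotProduct_self hdpos)
    · rw [dotProduct_symmLazyWalk_mulVec]
      linarith [abs_le.1 (hquad x)]
    · rw [dotProduct_symmLazyWalk_mulVec]
      linarith [abs_le.1 (hquad x)]
    · rw [sqrtStationaryDist, mulVec_smul, symmLazyWalk_mulVec_sqrtDegree hdpos]
    · obtain ⟨c, rfl⟩ := exists_eq_smul_sqrtDegree_of_symmLazyWalk_mulVec_eq hdpos hker hx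
      refine ⟨c * √(∑ i, ∑ j, A i j), ?_⟩
      rw [sqrtStationaryDist, smul_smul, mul_assoc, mul_inv_cancel₀ hS.ne', mul_one]
  have hDD : diagonal (sqrtDegree A) * diagonal (sqrtDegree A)⁻¹ = 1 := by
    rw [diagonal_mul_diagonal, ← diagonal_one]
    exact congrArg diagonal (funext fun i => mul_inv_cancel₀ (sqrtDegree_pos hdpos i).ne')
  exact summable_pow_sub_of_mul_eq_mul hDD (lazyWalk_mul_diagonal_sqrtDegree hdpos)
    (stationaryDist_mul_diagonal_sqrtDegree hdpos) hN

theorem laplacian_mulVec_diagonal_inv_degree_mulVec_tsum [Nonempty n] (hsym : A.IsSymm)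
    (hnonneg : ∀ i j, 0 ≤ A i j) (hdpos : ∀ i, 0 < ∑ j, A i j)
    (hker : ∀ x, laplacian A *ᵥ x = 0 → ∃ c : ℝ, ∀ i, x i = c) (w : n) :
    laplacian A *ᵥ diagonal (fun i => (∑ j, A i j)⁻¹) *ᵥ
        ((1 / 2 : ℝ) • ∑' t : ℕ, (lazyWalk A ^ t *ᵥ Pi.single w 1 - stationaryDist A)) =
      Pi.single w 1 - stationaryDist A := by
  set f : ℕ → n → ℝ := fun t => lazyWalk A ^ t *ᵥ Pi.single w 1 - stationaryDist A
  have hf : Summable f := by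
    have hS := summable_lazyWalk_pow_sub hsym hnonneg hdpos hker
    refine Pi.summable.2 fun i => ?_
    simpa [f, mulVec_single_one] using Pi.summable.1 (Pi.summable.1 hS i) w
  have hshift (t : ℕ) : f (t + 1) = lazyWalk A *ᵥ f t := by
    simp only [f, mulVec_sub, mulVec_mulVec, lazyWalk_mulVec_stationaryDist hdpos, pow_succ']
  have htel :=
    hf.tsum_eq_add_map_tsum (LinearMap.toContinuousLinearMap (mulVecLin (lazyWalk A))) hshift
  calc laplacian A *ᵥ diagonal (fun i => (∑ j, A i j)⁻¹) *ᵥ ((1 / 2 : ℝ) • ∑' t, f t)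
      = ∑' t, f t - lazyWalk A *ᵥ ∑' t, f t := by
        rw [mulVec_mulVec, laplacian_mul_diagonal_inv_degree hdpos, smul_mulVec, mulVec_smul,
          smul_smul, sub_mulVec, one_mulVec]
        norm_num
    _ = f 0 := sub_eq_of_eq_add htel
    _ = Pi.single w 1 - stationaryDist A := by simp only [f, pow_zero, one_mulVec]

end

theorem effective_resistance_from_sigma_general (n : ℕ) (A : Matrix (Fin n) (Fin n) ℝ)
    (hsym : A.IsSymm) (hnonneg : ∀ i j, 0 ≤ A i j)
    (hdpos : ∀ i, 0 < ∑ j, A i j)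
    (L : Matrix (Fin n) (Fin n) ℝ)
    (hL : L = Matrix.diagonal (fun i => ∑ j, A i j) - A)
    (hker : ∀ x : Fin n → ℝ, L.mulVec x = 0 → ∃ c : ℝ, ∀ i, x i = c)
    (Lp : Matrix (Fin n) (Fin n) ℝ)
    (hmp1 : L * Lp * L = L)
    (X : Matrix (Fin n) (Fin n) ℝ)
    (hX : X = (1 / 2 : ℝ) • (1 : Matrix (Fin n) (Fin n) ℝ)
        + (1 / 2 : ℝ) • (A * Matrix.diagonal (fun i => (∑ j, A i j)⁻¹)))
    (pi : Fin n → ℝ) (hpi : pi = fun i => (∑ j, A i j) / ∑ i, ∑ j, A i j)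
    (sigma : Fin n → Fin n → ℝ)
    (hsigma : sigma = fun w =>
      (1 / 2 : ℝ) • ∑' t : ℕ, ((X ^ t).mulVec (Pi.single w 1) - pi))
    (u v : Fin n) :
    (Pi.single u 1 - Pi.single v 1) ⬝ᵥ Lp.mulVec (Pi.single u 1 - Pi.single v 1)
      = ((Matrix.diagonal (fun i => (∑ j, A i j)⁻¹)).mulVec (sigma u)) u
        - ((Matrix.diagonal (fun i => (∑ j, A i j)⁻¹)).mulVec (sigma u)) v
        - ((Matrix.diagonal (fun i => (∑ j, A i j)⁻¹)).mulVec (sigma v)) u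
        + ((Matrix.diagonal (fun i => (∑ j, A i j)⁻¹)).mulVec (sigma v)) v := by
  have : Nonempty (Fin n) := ⟨u⟩
  set Dinv := diagonal fun i => (∑ j, A i j)⁻¹
  have hσ (w : Fin n) : L *ᵥ Dinv *ᵥ sigma w = Pi.single w 1 - pi := by
    subst hL hX hpi hsigma
    exact laplacian_mulVec_diagonal_inv_degree_mulVec_tsum hsym hnonneg hdpos hker w
  have hh : L *ᵥ (Dinv *ᵥ sigma u - Dinv *ᵥ sigma v) = Pi.single u 1 - Pi.single v 1 := by
    rw [mulVec_sub, hσ, hσ]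
    abel
  rw [single_sub_single_dotProduct_mulVec_eq hmp1 hker hh, Pi.sub_apply, Pi.sub_apply]
  ring

/-- for a connected weighted graph, the effective resistance satisfies
`R(u,v) = (D⁻¹σ_u)_u - (D⁻¹σ_u)_v - (D⁻¹σ_v)_u + (D⁻¹σ_v)_v`,
where `σ_w = (1/2) ∑_{t=0}^∞ (X^t 1_w - π)`. -/
theorem effective_resistance_from_sigma (n : ℕ) (A : Matrix (Fin n) (Fin n) ℝ)
    (hsym : A.IsSymm) (hnonneg : ∀ i j, 0 ≤ A i j) (hloop : ∀ i, A i i = 0)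
    (hdpos : ∀ i, 0 < ∑ j, A i j)
    (L : Matrix (Fin n) (Fin n) ℝ)
    (hL : L = Matrix.diagonal (fun i => ∑ j, A i j) - A)
    (hker : ∀ x : Fin n → ℝ, L.mulVec x = 0 → ∃ c : ℝ, ∀ i, x i = c)
    (Lp : Matrix (Fin n) (Fin n) ℝ)
    (hmp1 : L * Lp * L = L) (hmp2 : Lp * L * Lp = Lp)
    (hmp3 : (L * Lp).IsSymm) (hmp4 : (Lp * L).IsSymm)
    (X : Matrix (Fin n) (Fin n) ℝ)
    (hX : X = (1 / 2 : ℝ) • (1 : Matrix (Fin n) (Fin n) ℝ)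
        + (1 / 2 : ℝ) • (A * Matrix.diagonal (fun i => (∑ j, A i j)⁻¹)))
    (pi : Fin n → ℝ) (hpi : pi = fun i => (∑ j, A i j) / ∑ i, ∑ j, A i j)
    (sigma : Fin n → Fin n → ℝ)
    (hsigma : sigma = fun w =>
      (1 / 2 : ℝ) • ∑' t : ℕ, ((X ^ t).mulVec (Pi.single w 1) - pi))
    (u v : Fin n) :
    (Pi.single u 1 - Pi.single v 1) ⬝ᵥ Lp.mulVec (Pi.single u 1 - Pi.single v 1)
      = ((Matrix.diagonal (fun i => (∑ j, A i j)⁻¹)).mulVec (sigma u)) u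
        - ((Matrix.diagonal (fun i => (∑ j, A i j)⁻¹)).mulVec (sigma u)) v
        - ((Matrix.diagonal (fun i => (∑ j, A i j)⁻¹)).mulVec (sigma v)) u
        + ((Matrix.diagonal (fun i => (∑ j, A i j)⁻¹)).mulVec (sigma v)) v :=
  effective_resistance_from_sigma_general n A hsym hnonneg hdpos L hL hker Lp hmp1 X hX pi hpi sigma
    hsigma u v
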